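/- If f ∈ L²(T^{E₁}) (product Haar measure) is such that f ∘ Φ equals, as an element of L²(T^{E₂}), a character function χ_m for some m : E₂ → ℤ, then f itself equals (in L²) a character function χ_n for some n : E₁ → ℤ, up to a scalar of modulus one; more precisely there exist n : E₁ → ℤ and c ∈ ℂ with |c| = 1 such that f = c·χ_n in L²(T^{E₁}). -/

import Mathlib

open MeasureTheory

attribute [local instance] ZeroLEOneClass.factZeroLtOne

/-- The character function `χ_n(A) = ∏_e exp(2πi n(e) A(e))` on `T^E`, `T = ℝ/ℤ`. -/
noncomputable def chi {E : Type*} [Fintype E] (n : E → ℤ) (A : E → UnitAddCircle) : ℂ :=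
  ∏ e, fourier (n e) (A e)

/-- The additive path map `Φ(A)(e) = Σ_i σ_i A(f_i)` where `p e = [(f₁,σ₁),…,(f_n,σ_n)]`
and `true` stands for the sign `+1`. -/
def pathMapAdd {E₁ E₂ M : Type*} [AddCommGroup M] (p : E₁ → List (E₂ × Bool)) (A : E₂ → M) :
    E₁ → M :=
  fun e => ((p e).map fun q => if q.2 then A q.1 else -A q.1).sum

/-!
Φ has an additive right inverse `S`: put `σ₁ B(e)` on the first edge `f₁` of `p e` and `0` on
every other edge of `E₂`. By Fubini and translation invariance, `(y, x) ↦ S x + y` is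
quasi-measure-preserving, so for some fixed `y` we get `f (x + Φ y) = χ_m (S x + y)` for a.e. `x`.
Since `χ_m (S x + y) = χ_n x · χ_m y` with `n e = σ₁ m(f₁)`, translating back by `Φ y` shows
that `f` is a unimodular multiple of `χ_n`.
-/

theorem MeasureTheory.exists_ae_eq_comp_add_of_comp_ae_eq {G H α : Type*} [AddGroup G]
    [AddGroup H] [MeasurableSpace G] [MeasurableSpace H] [MeasurableAdd G] [MeasurableAdd₂ H]
    {μ : Measure G} {ν : Measure H} [SFinite μ] [SFinite ν] [μ.IsAddRightInvariant]
    [ν.IsAddLeftInvariant] [NeZero ν] (Φ : H →+ G) (S : G →+ H) (hS : Measurable S)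
    (hΦS : ∀ x, Φ (S x) = x) {f : G → α} {g : H → α} (h : f ∘ Φ =ᵐ[ν] g) :
    ∃ y, f =ᵐ[μ] fun x => g (S x + y) := by
  have hψ : Measure.QuasiMeasurePreserving (fun z : H × G => S z.2 + z.1) (ν.prod μ) ν :=
    QuasiMeasurePreserving.prod_of_left ((hS.comp measurable_snd).add measurable_fst)
      (ae_of_all _ fun x => (measurePreserving_add_left ν (S x)).quasiMeasurePreserving)
  obtain ⟨y, hy⟩ := (Measure.ae_ae_of_ae_prod (hψ.ae_eq_comp h)).exists
  refine ⟨-S (Φ y) + y, ?_⟩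
  filter_upwards [(measurePreserving_sub_right μ (Φ y)).quasiMeasurePreserving.ae_eq_comp hy]
    with x hx
  simpa [hΦS, add_assoc, sub_eq_add_neg] using hx

section Characters

variable {E : Type*} [Fintype E]

theorem chi_add (n : E → ℤ) (A B : E → UnitAddCircle) : chi n (A + B) = chi n A * chi n B := by
  simp only [chi, Pi.add_apply, ← Finset.prod_mul_distrib, fourier_apply, smul_add,
    AddCircle.toCircle_add, Circle.coe_mul]

theorem norm_chi (n : E → ℤ) (A : E → UnitAddCircle) : ‖chi n A‖ = 1 := by
  simp [chi, fourier_apply, Circle.norm_coe]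

end Characters

section PathMap

variable {E₁ E₂ M : Type*} [AddCommGroup M]

def signed (b : Bool) (x : M) : M := if b then x else -x

@[simp] theorem signed_zero (b : Bool) : signed b (0 : M) = 0 := by
  cases b <;> simp [signed]

theorem signed_add (b : Bool) (x y : M) : signed b (x + y) = signed b x + signed b y := by
  cases b <;> simp [signed, add_comm]

@[simp] theorem signed_signed (b : Bool) (x : M) : signed b (signed b x) = x := by
  cases b <;> simp [signed]

theorem fourier_signed (b : Bool) (k : ℤ) (x : UnitAddCircle) :
    fourier k (signed b x) = fourier (signed b k) x := by
  cases b <;> simp [signed, fourier_apply, smul_neg, neg_smul]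

variable (p : E₁ → List (E₂ × Bool))

theorem pathMapAdd_add (A B : E₂ → M) :
    pathMapAdd p (A + B) = pathMapAdd p A + pathMapAdd p B := by
  funext e
  simp only [pathMapAdd, Pi.add_apply, ← List.sum_map_add]
  congr 1
  exact List.map_congr_left fun q _ => signed_add q.2 (A q.1) (B q.1)

def pathMapAddHom : (E₂ → M) →+ (E₁ → M) :=
  AddMonoidHom.mk' (pathMapAdd p) (pathMapAdd_add p)

variable {p} (hne : ∀ e, p e ≠ [])

def firstEdge (e : E₁) : E₂ × Bool := (p e).head (hne e)

def headCharge (m : E₂ → ℤ) (e : E₁) : ℤ := signed (firstEdge hne e).2 (m (firstEdge hne e).1)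

theorem firstEdge_mem (e : E₁) : firstEdge hne e ∈ p e := List.head_mem (hne e)

theorem firstEdge_fst_injective
    (hdisj : ∀ e e', e ≠ e' → ∀ f, f ∈ (p e).map Prod.fst → f ∉ (p e').map Prod.fst) :
    Function.Injective fun e => (firstEdge hne e).1 := by
  intro e e' (hee : (firstEdge hne e).1 = (firstEdge hne e').1)
  by_contra hne'
  exact hdisj e e' hne' _ (List.mem_map_of_mem (firstEdge_mem hne e))
    (hee ▸ List.mem_map_of_mem (firstEdge_mem hne e'))

theorem fst_ne_firstEdge_fst_of_mem_tail (hnodup : ∀ e, ((p e).map Prod.fst).Nodup)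
    (hdisj : ∀ e e', e ≠ e' → ∀ f, f ∈ (p e).map Prod.fst → f ∉ (p e').map Prod.fst)
    {e : E₁} {q : E₂ × Bool} (hq : q ∈ (p e).tail) (e' : E₁) :
    q.1 ≠ (firstEdge hne e').1 := by
  intro hqe
  by_cases hee : e' = e
  · subst hee
    have hnd := hnodup e'
    rw [← List.cons_head_tail (hne e'), List.map_cons] at hnd
    exact (List.nodup_cons.mp hnd).1 (hqe ▸ List.mem_map_of_mem hq)
  · exact hdisj e' e hee _ (List.mem_map_of_mem (firstEdge_mem hne e'))
      (hqe ▸ List.mem_map_of_mem (List.mem_of_mem_tail hq))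

variable [Fintype E₁] [DecidableEq E₂]

def headSection : (E₁ → M) →+ (E₂ → M) where
  toFun B := ∑ e, Pi.single (firstEdge hne e).1 (signed (firstEdge hne e).2 (B e))
  map_zero' := by simp
  map_add' A B := by simp [signed_add, Pi.single_add, Finset.sum_add_distrib]

theorem headSection_apply (B : E₁ → M) (g : E₂) :
    headSection hne B g =
      ∑ e, (Pi.single (firstEdge hne e).1 (signed (firstEdge hne e).2 (B e)) : E₂ → M) g :=
  Finset.sum_apply _ _ _

theorem headSection_apply_of_notMem_range (B : E₁ → M) {g : E₂}
    (hg : g ∉ Set.range fun e => (firstEdge hne e).1) : headSection hne B g = 0 :=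
  (headSection_apply hne B g).trans <|
    Finset.sum_eq_zero fun e _ => Pi.single_eq_of_ne (fun he => hg ⟨e, he.symm⟩) _

theorem headSection_apply_firstEdge
    (hdisj : ∀ e e', e ≠ e' → ∀ f, f ∈ (p e).map Prod.fst → f ∉ (p e').map Prod.fst)
    (B : E₁ → M) (e : E₁) :
    headSection hne B (firstEdge hne e).1 = signed (firstEdge hne e).2 (B e) := by
  rw [headSection_apply]
  refine (Finset.sum_eq_single e (fun e' _ he' => ?_)
    fun he => absurd (Finset.mem_univ e) he).trans (by simp)
  exact Pi.single_eq_of_ne ((firstEdge_fst_injective hne hdisj).ne he'.symm) _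

theorem pathMapAdd_headSection (hnodup : ∀ e, ((p e).map Prod.fst).Nodup)
    (hdisj : ∀ e e', e ≠ e' → ∀ f, f ∈ (p e).map Prod.fst → f ∉ (p e').map Prod.fst)
    (B : E₁ → M) : pathMapAdd p (headSection hne B) = B := by
  funext e
  have htail : ∀ q ∈ (p e).tail, signed q.2 (headSection hne B q.1) = 0 := fun q hq => by
    rw [headSection_apply_of_notMem_range hne B fun ⟨e', he'⟩ =>
      fst_ne_firstEdge_fst_of_mem_tail hne hnodup hdisj hq e' he'.symm, signed_zero]
  change ((p e).map fun q => signed q.2 (headSection hne B q.1)).sum = B e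
  rw [← List.cons_head_tail (hne e), List.map_cons, List.sum_cons,
    List.sum_eq_zero fun x hx => ?_, add_zero]
  · exact (congrArg _ (headSection_apply_firstEdge hne hdisj B e)).trans (signed_signed _ _)
  · obtain ⟨q, hq, rfl⟩ := List.mem_map.mp hx
    exact htail q hq

theorem measurable_headSection : Measurable (headSection hne : (E₁ → UnitAddCircle) → _) := by
  refine measurable_pi_lambda _ fun g => ?_
  simp only [headSection_apply, Pi.single_apply]
  refine Finset.measurable_sum _ fun e _ => ?_
  split_ifs
  · cases (firstEdge hne e).2
    exacts [(measurable_pi_apply e).neg, measurable_pi_apply e]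
  · exact measurable_const

variable [Fintype E₂]

theorem chi_headSection
    (hdisj : ∀ e e', e ≠ e' → ∀ f, f ∈ (p e).map Prod.fst → f ∉ (p e').map Prod.fst)
    (m : E₂ → ℤ) (B : E₁ → UnitAddCircle) :
    chi m (headSection hne B) = chi (headCharge hne m) B := by
  refine (Fintype.prod_of_injective _ (firstEdge_fst_injective hne hdisj) _ _ (fun g hg => ?_)
    fun e => ?_).symm
  · rw [headSection_apply_of_notMem_range hne B hg, fourier_eval_zero]
  · rw [headSection_apply_firstEdge hne hdisj, fourier_signed]
    rfl

end PathMap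

theorem stmt14_general {E₁ E₂ : Type*} [Fintype E₁] [Fintype E₂]
    (p : E₁ → List (E₂ × Bool))
    (hne : ∀ e, p e ≠ [])
    (hnodup : ∀ e, ((p e).map Prod.fst).Nodup)
    (hdisj : ∀ e e', e ≠ e' → ∀ f, f ∈ (p e).map Prod.fst → f ∉ (p e').map Prod.fst)
    (f : (E₁ → UnitAddCircle) → ℂ)
    (m : E₂ → ℤ)
    (h : f ∘ pathMapAdd p
      =ᵐ[Measure.pi fun _ : E₂ => (volume : Measure UnitAddCircle)] chi m) :
    ∃ (n : E₁ → ℤ) (c : ℂ), ‖c‖ = 1 ∧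
      f =ᵐ[Measure.pi fun _ : E₁ => (volume : Measure UnitAddCircle)]
        fun A => c * chi n A := by
  classical
  obtain ⟨y, hy⟩ := exists_ae_eq_comp_add_of_comp_ae_eq
    (μ := Measure.pi fun _ : E₁ => (volume : Measure UnitAddCircle))
    (pathMapAddHom p) (headSection hne) (measurable_headSection hne)
    (pathMapAdd_headSection hne hnodup hdisj) h
  refine ⟨headCharge hne m, chi m y, norm_chi m y, ?_⟩
  filter_upwards [hy] with B hB
  rw [hB, chi_add, chi_headSection hne hdisj, mul_comm]

/-- If `f ∈ L²(T^{E₁})` is such that `f ∘ Φ` equals a character `χ_m` almost everywhere,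
then `f` itself equals `c·χ_n` almost everywhere for some `n` and some scalar `c`
of modulus one. -/
theorem stmt14 {E₁ E₂ : Type*} [Fintype E₁] [Fintype E₂]
    (p : E₁ → List (E₂ × Bool))
    (hne : ∀ e, p e ≠ [])
    (hnodup : ∀ e, ((p e).map Prod.fst).Nodup)
    (hdisj : ∀ e e', e ≠ e' → ∀ f, f ∈ (p e).map Prod.fst → f ∉ (p e').map Prod.fst)
    (f : (E₁ → UnitAddCircle) → ℂ)
    (hf : MemLp f 2 (Measure.pi fun _ : E₁ => (volume : Measure UnitAddCircle)))
    (m : E₂ → ℤ)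
    (h : f ∘ pathMapAdd p
      =ᵐ[Measure.pi fun _ : E₂ => (volume : Measure UnitAddCircle)] chi m) :
    ∃ (n : E₁ → ℤ) (c : ℂ), ‖c‖ = 1 ∧
      f =ᵐ[Measure.pi fun _ : E₁ => (volume : Measure UnitAddCircle)]
        fun A => c * chi n A :=
  stmt14_general p hne hnodup hdisj f m h
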